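/- Let G be a directed flow network with integer capacities, sources s_1, s_2 and sinks t_1, t_2, let X be a vertex cover of G and Y = V(G) ∖ X, and let (f^1, f^2) be a fractional 2-commodity flow in G. Suppose there are vertices u, v ∈ X, distinct vertices y, z ∈ Y, and a commodity i ∈ {1, 2} such that the arcs (u, y), (y, v), (u, z) and (z, v) all exist in G and each of them is mono-fractional for commodity i. Then there exists a fractional 2-commodity flow (g^1, g^2) in G whose value equals that of (f^1, f^2) for both commodities and which has strictly fewer fractional arcs than (f^1, f^2). -/
import Mathlib


/-- `x : ℝ` is an integer. -/
def IsAnInt (x : ℝ) : Prop := ∃ n : ℤ, x = n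

/-- A fractional 2-commodity flow on the directed flow network with arc set
`A`, capacities `cap`, sources `s 0, s 1` and sinks `t 0, t 1`. -/
def IsFracFlow {V : Type*} [Fintype V] (A : V → V → Prop) (cap : V → V → ℕ)
    (s t : Fin 2 → V) (f : Fin 2 → V → V → ℝ) : Prop :=
  (∀ i u v, 0 ≤ f i u v) ∧
  (∀ i u v, ¬ A u v → f i u v = 0) ∧
  (∀ u v, f 0 u v + f 1 u v ≤ cap u v) ∧
  (∀ i q, q ≠ s i → q ≠ t i → (∑ u, f i u q) = (∑ u, f i q u))

/-- The value of a single-commodity flow `g` with source `s`. -/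
def flowValue {V : Type*} [Fintype V] (s : V) (g : V → V → ℝ) : ℝ :=
  (∑ u, g s u) - ∑ u, g u s

/-- The number of fractional arcs of a 2-commodity flow. -/
noncomputable def fracArcs {V : Type*} [Fintype V] (f : Fin 2 → V → V → ℝ) : ℕ :=
  Set.ncard {p : V × V | ¬ IsAnInt (f 0 p.1 p.2) ∨ ¬ IsAnInt (f 1 p.1 p.2)}

/-- The number of bi-fractional arcs of a 2-commodity flow. -/
noncomputable def biFracArcs {V : Type*} [Fintype V] (f : Fin 2 → V → V → ℝ) : ℕ :=
  Set.ncard {p : V × V | ¬ IsAnInt (f 0 p.1 p.2) ∧ ¬ IsAnInt (f 1 p.1 p.2)}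

/-- The index of the other commodity. -/
def otherC : Fin 2 → Fin 2 := fun i => if i = 0 then 1 else 0

/-- The arc `(x, y)` is mono-fractional for commodity `i`. -/
def MonoFrac {V : Type*} (f : Fin 2 → V → V → ℝ) (i : Fin 2) (x y : V) : Prop :=
  ¬ IsAnInt (f i x y) ∧ IsAnInt (f (otherC i) x y)

-- auxiliary lemmas
lemma fract_pos_of_not_isAnInt {x : ℝ} (h : ¬ IsAnInt x) : 0 < Int.fract x := by
  rcases (Int.fract_nonneg x).lt_or_eq with h' | h'
  · exact h'
  · exact absurd ⟨⌊x⌋, by linarith [Int.floor_add_fract x]⟩ h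

lemma otherC_ne (i : Fin 2) : otherC i ≠ i := by fin_cases i <;> decide

lemma eq_or_eq_otherC (i j : Fin 2) : j = i ∨ j = otherC i := by
  fin_cases i <;> fin_cases j <;> simp [otherC]

lemma two_sum (i : Fin 2) (c : Fin 2 → ℝ) : c 0 + c 1 = c i + c (otherC i) := by
  fin_cases i <;> simp [otherC] <;> ring

lemma sum_ind {V : Type*} [Fintype V] [DecidableEq V] (p1 p2 q : V) :
    (∑ w, (if (w, q) = (p1, p2) then (1:ℝ) else 0)) = if q = p2 then 1 else 0 := by
  by_cases h : q = p2 <;> simp [Prod.ext_iff, h, Finset.sum_ite_eq']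

lemma sum_ind' {V : Type*} [Fintype V] [DecidableEq V] (p1 p2 q : V) :
    (∑ w, (if (q, w) = (p1, p2) then (1:ℝ) else 0)) = if q = p1 then 1 else 0 := by
  by_cases h : q = p1 <;> simp [Prod.ext_iff, h, Finset.sum_ite_eq']

/-- Lemma 4.4 (Case 1 Rule). -/
theorem case1_rule (V : Type) [Fintype V] [DecidableEq V]
    (A : V → V → Prop) (cap : V → V → ℕ) (s t : Fin 2 → V)
    (X : Finset V) (hX : ∀ u v, A u v → u ∈ X ∨ v ∈ X)
    (f : Fin 2 → V → V → ℝ) (hf : IsFracFlow A cap s t f)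
    (u v y z : V) (hu : u ∈ X) (hv : v ∈ X) (hy : y ∉ X) (hz : z ∉ X)
    (hyz : y ≠ z) (i : Fin 2)
    (hA : A u y ∧ A y v ∧ A u z ∧ A z v)
    (hmono : MonoFrac f i u y ∧ MonoFrac f i y v ∧
             MonoFrac f i u z ∧ MonoFrac f i z v) :
    ∃ g : Fin 2 → V → V → ℝ, IsFracFlow A cap s t g ∧
      (∀ j, flowValue (s j) (g j) = flowValue (s j) (f j)) ∧
      fracArcs g < fracArcs f := by
  obtain ⟨hAuy, hAyv, hAuz, hAzv⟩ := hA
  obtain ⟨hm1, hm2, hm3, hm4⟩ := hmono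
  obtain ⟨hf0, hfA, hfc, hfcons⟩ := hf
  have huy : u ≠ y := fun h => hy (h ▸ hu)
  have huz : u ≠ z := fun h => hz (h ▸ hu)
  have hvy : v ≠ y := fun h => hy (h ▸ hv)
  have hvz : v ≠ z := fun h => hz (h ▸ hv)
  have hyu : y ≠ u := huy.symm
  have hyv2 : y ≠ v := hvy.symm
  have hzu : z ≠ u := huz.symm
  have hzv2 : z ≠ v := hvz.symm
  have hzy : z ≠ y := hyz.symm
  have hfr1 : 0 < Int.fract (f i u y) := fract_pos_of_not_isAnInt hm1.1
  have hfr2 : 0 < Int.fract (f i y v) := fract_pos_of_not_isAnInt hm2.1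
  have hfr3 : 0 < Int.fract (f i u z) := fract_pos_of_not_isAnInt hm3.1
  have hfr4 : 0 < Int.fract (f i z v) := fract_pos_of_not_isAnInt hm4.1
  set ε := min (min (1 - Int.fract (f i u y)) (1 - Int.fract (f i y v)))
      (min (Int.fract (f i u z)) (Int.fract (f i z v))) with hεdef
  have hε0 : 0 < ε := by
    refine lt_min (lt_min ?_ ?_) (lt_min hfr3 hfr4) <;>
      simp [sub_pos, Int.fract_lt_one]
  have hε1 : ε ≤ 1 - Int.fract (f i u y) := le_trans (min_le_left _ _) (min_le_left _ _)
  have hε2 : ε ≤ 1 - Int.fract (f i y v) := le_trans (min_le_left _ _) (min_le_right _ _)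
  have hε3 : ε ≤ Int.fract (f i u z) := le_trans (min_le_right _ _) (min_le_left _ _)
  have hε4 : ε ≤ Int.fract (f i z v) := le_trans (min_le_right _ _) (min_le_right _ _)
  set D : V → V → ℝ := fun a b =>
    (if (a, b) = (u, y) then 1 else 0) + (if (a, b) = (y, v) then 1 else 0)
      - (if (a, b) = (u, z) then 1 else 0) - (if (a, b) = (z, v) then 1 else 0) with hD
  have hDuy : D u y = 1 := by simp [hD, Prod.ext_iff, huy, huz, hyz]
  have hDyv : D y v = 1 := by simp [hD, Prod.ext_iff, hyu, hyz, hzv2]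
  have hDuz : D u z = -1 := by simp [hD, Prod.ext_iff, huy, huz, hzy, hzv2]
  have hDzv : D z v = -1 := by simp [hD, Prod.ext_iff, hzu, hzy, hyv2]
  have hDcases : ∀ a b : V, (a, b) = (u, y) ∨ (a, b) = (y, v) ∨ (a, b) = (u, z)
      ∨ (a, b) = (z, v) ∨ D a b = 0 := by
    intro a b
    by_cases h1 : (a, b) = (u, y); · exact Or.inl h1
    by_cases h2 : (a, b) = (y, v); · exact Or.inr (Or.inl h2)
    by_cases h3 : (a, b) = (u, z); · exact Or.inr (Or.inr (Or.inl h3))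
    by_cases h4 : (a, b) = (z, v); · exact Or.inr (Or.inr (Or.inr (Or.inl h4)))
    refine Or.inr (Or.inr (Or.inr (Or.inr ?_)))
    simp only [hD]
    rw [if_neg h1, if_neg h2, if_neg h3, if_neg h4]
    ring
  have hDsum : ∀ q : V, (∑ w, D w q) = (∑ w, D q w) := by
    intro q
    simp only [hD, Finset.sum_add_distrib, Finset.sum_sub_distrib, sum_ind, sum_ind']
    ring
  set g : Fin 2 → V → V → ℝ :=
    fun j a b => f j a b + (if j = i then ε * D a b else 0) with hg
  have hg_other : ∀ a b : V, g (otherC i) a b = f (otherC i) a b := by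
    intro a b; simp [hg, otherC_ne i]
  have hfloor_le : ∀ a b : V, Int.fract (f i a b) ≤ f i a b := by
    intro a b
    have h1 : (0:ℝ) ≤ (⌊f i a b⌋ : ℝ) := by
      exact_mod_cast Int.floor_nonneg.mpr (hf0 i a b)
    have h2 : Int.fract (f i a b) = f i a b - ⌊f i a b⌋ := (Int.self_sub_floor _).symm
    linarith
  refine ⟨g, ⟨?_, ?_, ?_, ?_⟩, ?_, ?_⟩
  · -- nonnegativity
    intro j a b
    by_cases hj : j = i
    · subst hj
      rcases hDcases a b with h | h | h | h | h
      · rw [Prod.ext_iff] at h; obtain ⟨rfl, rfl⟩ := h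
        simp only [hg, eq_self_iff_true, if_true, if_pos rfl, hDuy, mul_one]
        linarith [hf0 j a b]
      · rw [Prod.ext_iff] at h; obtain ⟨rfl, rfl⟩ := h
        simp only [hg, eq_self_iff_true, if_true, if_pos rfl, hDyv, mul_one]
        linarith [hf0 j a b]
      · rw [Prod.ext_iff] at h; obtain ⟨rfl, rfl⟩ := h
        simp only [hg, eq_self_iff_true, if_true, if_pos rfl, hDuz, mul_neg_one]
        linarith [hfloor_le a b]
      · rw [Prod.ext_iff] at h; obtain ⟨rfl, rfl⟩ := h
        simp only [hg, eq_self_iff_true, if_true, if_pos rfl, hDzv, mul_neg_one]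
        linarith [hfloor_le a b]
      · simpa [hg, h] using hf0 j a b
    · simp only [hg, if_neg hj, add_zero]; exact hf0 j a b
  · -- zero on non-arcs
    intro j a b hab
    have h1 : (a, b) ≠ (u, y) := by
      intro h; rw [Prod.ext_iff] at h; obtain ⟨rfl, rfl⟩ := h; exact hab hAuy
    have h2 : (a, b) ≠ (y, v) := by
      intro h; rw [Prod.ext_iff] at h; obtain ⟨rfl, rfl⟩ := h; exact hab hAyv
    have h3 : (a, b) ≠ (u, z) := by
      intro h; rw [Prod.ext_iff] at h; obtain ⟨rfl, rfl⟩ := h; exact hab hAuz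
    have h4 : (a, b) ≠ (z, v) := by
      intro h; rw [Prod.ext_iff] at h; obtain ⟨rfl, rfl⟩ := h; exact hab hAzv
    have hD0 : D a b = 0 := by
      simp only [hD]; rw [if_neg h1, if_neg h2, if_neg h3, if_neg h4]; ring
    simp [hg, hD0, hfA j a b hab]
  · -- capacity
    intro a b
    have hkey : f 0 a b + f 1 a b + ε * D a b = g 0 a b + g 1 a b := by
      rw [two_sum i (fun j => g j a b), two_sum i (fun j => f j a b)]
      simp only [hg, eq_self_iff_true, if_true, if_neg (otherC_ne i)]
      ring
    rw [← hkey]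
    have h01 : f 0 a b + f 1 a b = f i a b + f (otherC i) a b := two_sum i (fun j => f j a b)
    rcases hDcases a b with h | h | h | h | h
    · rw [Prod.ext_iff] at h; obtain ⟨rfl, rfl⟩ := h
      rw [hDuy, mul_one]
      obtain ⟨n, hn⟩ := hm1.2
      have hfr : Int.fract (f i a b) = f i a b - ⌊f i a b⌋ := (Int.self_sub_floor _).symm
      have hlt : ((⌊f i a b⌋ + n : ℤ) : ℝ) < (cap a b : ℤ) := by
        push_cast
        have := hfc a b
        rw [h01, hn] at this
        linarith
      have hle : ((⌊f i a b⌋ + n : ℤ) : ℝ) + 1 ≤ ((cap a b : ℤ) : ℝ) := by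
        have := Int.lt_iff_add_one_le.mp (by exact_mod_cast hlt)
        exact_mod_cast this
      push_cast at hle
      rw [h01, hn]
      linarith
    · rw [Prod.ext_iff] at h; obtain ⟨rfl, rfl⟩ := h
      rw [hDyv, mul_one]
      obtain ⟨n, hn⟩ := hm2.2
      have hfr : Int.fract (f i a b) = f i a b - ⌊f i a b⌋ := (Int.self_sub_floor _).symm
      have hlt : ((⌊f i a b⌋ + n : ℤ) : ℝ) < (cap a b : ℤ) := by
        push_cast
        have := hfc a b
        rw [h01, hn] at this
        linarith
      have hle : ((⌊f i a b⌋ + n : ℤ) : ℝ) + 1 ≤ ((cap a b : ℤ) : ℝ) := by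
        have := Int.lt_iff_add_one_le.mp (by exact_mod_cast hlt)
        exact_mod_cast this
      push_cast at hle
      rw [h01, hn]
      linarith
    · rw [Prod.ext_iff] at h; obtain ⟨rfl, rfl⟩ := h
      rw [hDuz, mul_neg_one]
      linarith [hfc a b]
    · rw [Prod.ext_iff] at h; obtain ⟨rfl, rfl⟩ := h
      rw [hDzv, mul_neg_one]
      linarith [hfc a b]
    · rw [h, mul_zero, add_zero]; exact hfc a b
  · -- conservation
    intro j q hqs hqt
    have hbase := hfcons j q hqs hqt
    by_cases hj : j = i
    · subst hj
      simp only [hg, eq_self_iff_true, if_true, if_pos rfl]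
      rw [Finset.sum_add_distrib, Finset.sum_add_distrib, ← Finset.mul_sum,
        ← Finset.mul_sum, hbase, hDsum q]
    · simp only [hg, if_neg hj, add_zero]; exact hbase
  · -- flow values
    intro j
    by_cases hj : j = i
    · subst hj
      unfold flowValue
      simp only [hg, eq_self_iff_true, if_true, if_pos rfl]
      rw [Finset.sum_add_distrib, Finset.sum_add_distrib, ← Finset.mul_sum,
        ← Finset.mul_sum, hDsum (s j)]
      ring
    · simp [flowValue, hg, hj]
  · -- fewer fractional arcs
    have hi01 : i = 0 ∨ i = 1 := by fin_cases i <;> simp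
    have hSf : ∀ a b : V, ¬ IsAnInt (f i a b) →
        (¬ IsAnInt (f 0 a b) ∨ ¬ IsAnInt (f 1 a b)) := by
      intro a b h; rcases hi01 with rfl | rfl
      · exact Or.inl h
      · exact Or.inr h
    have hsub : {p : V × V | ¬ IsAnInt (g 0 p.1 p.2) ∨ ¬ IsAnInt (g 1 p.1 p.2)} ⊆
        {p : V × V | ¬ IsAnInt (f 0 p.1 p.2) ∨ ¬ IsAnInt (f 1 p.1 p.2)} := by
      rintro ⟨a, b⟩ hp
      rcases hDcases a b with h | h | h | h | h
      · rw [Prod.ext_iff] at h; obtain ⟨rfl, rfl⟩ := h; exact hSf a b hm1.1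
      · rw [Prod.ext_iff] at h; obtain ⟨rfl, rfl⟩ := h; exact hSf a b hm2.1
      · rw [Prod.ext_iff] at h; obtain ⟨rfl, rfl⟩ := h; exact hSf a b hm3.1
      · rw [Prod.ext_iff] at h; obtain ⟨rfl, rfl⟩ := h; exact hSf a b hm4.1
      · have heq : ∀ j' : Fin 2, g j' a b = f j' a b := by
          intro j'; by_cases hj : j' = i <;> simp [hg, hj, h]
        simpa only [Set.mem_setOf_eq, heq] using hp
    have hkey : ∀ a b : V, MonoFrac f i a b → IsAnInt (g i a b) →
        ((a, b) ∈ {p : V × V | ¬ IsAnInt (f 0 p.1 p.2) ∨ ¬ IsAnInt (f 1 p.1 p.2)} ∧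
         (a, b) ∉ {p : V × V | ¬ IsAnInt (g 0 p.1 p.2) ∨ ¬ IsAnInt (g 1 p.1 p.2)}) := by
      intro a b hm hgint
      refine ⟨hSf a b hm.1, ?_⟩
      have hall : ∀ j : Fin 2, IsAnInt (g j a b) := by
        intro j
        rcases eq_or_eq_otherC i j with rfl | rfl
        · exact hgint
        · rw [hg_other]; exact hm.2
      intro hmem
      rcases hmem with h | h
      · exact h (hall 0)
      · exact h (hall 1)
    have hwit : ∃ p : V × V,
        p ∈ {p : V × V | ¬ IsAnInt (f 0 p.1 p.2) ∨ ¬ IsAnInt (f 1 p.1 p.2)} ∧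
        p ∉ {p : V × V | ¬ IsAnInt (g 0 p.1 p.2) ∨ ¬ IsAnInt (g 1 p.1 p.2)} := by
      have hεcase : ε = 1 - Int.fract (f i u y) ∨ ε = 1 - Int.fract (f i y v) ∨
          ε = Int.fract (f i u z) ∨ ε = Int.fract (f i z v) := by
        rw [hεdef]
        rcases min_choice (min (1 - Int.fract (f i u y)) (1 - Int.fract (f i y v)))
            (min (Int.fract (f i u z)) (Int.fract (f i z v))) with h | h <;> rw [h]
        · rcases min_choice (1 - Int.fract (f i u y)) (1 - Int.fract (f i y v)) with
            h' | h' <;> rw [h']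
          · exact Or.inl rfl
          · exact Or.inr (Or.inl rfl)
        · rcases min_choice (Int.fract (f i u z)) (Int.fract (f i z v)) with h' | h' <;>
            rw [h']
          · exact Or.inr (Or.inr (Or.inl rfl))
          · exact Or.inr (Or.inr (Or.inr rfl))
      rcases hεcase with hε | hε | hε | hε
      · refine ⟨(u, y), hkey u y hm1 ⟨⌊f i u y⌋ + 1, ?_⟩⟩
        simp only [hg, eq_self_iff_true, if_true, if_pos rfl, hDuy, mul_one, hε, ← Int.self_sub_floor]
        push_cast; ring
      · refine ⟨(y, v), hkey y v hm2 ⟨⌊f i y v⌋ + 1, ?_⟩⟩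
        simp only [hg, eq_self_iff_true, if_true, if_pos rfl, hDyv, mul_one, hε, ← Int.self_sub_floor]
        push_cast; ring
      · refine ⟨(u, z), hkey u z hm3 ⟨⌊f i u z⌋, ?_⟩⟩
        simp only [hg, eq_self_iff_true, if_true, hDuz, mul_neg_one, hε, ← Int.self_sub_floor]
        ring
      · refine ⟨(z, v), hkey z v hm4 ⟨⌊f i z v⌋, ?_⟩⟩
        simp only [hg, eq_self_iff_true, if_true, hDzv, mul_neg_one, hε, ← Int.self_sub_floor]
        ring
    obtain ⟨p, hpf, hpg⟩ := hwit
    exact Set.ncard_lt_ncard ((Set.ssubset_iff_of_subset hsub).mpr ⟨p, hpf, hpg⟩)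
      (Set.toFinite _)
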